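/- arXiv:1705.06131 — 2 statements merged into one kernel-verified Lean document; each statement's English description precedes it below -/
import Mathlib

section
/- Let C₁₂, C₁₃ > 0, t₀ ∈ ℝ, and let y : (t₀,∞) → ℝ be a nonnegative differentiable function satisfying y'(t) + C₁₂ y(t)² ≤ C₁₃ for all t > t₀. Then y(t) ≤ 2/(C₁₂ (t - t₀)) + √(2 C₁₃ / C₁₂) for all t > t₀. -/
/-! For `a > t₀` the barrier `Y(s) = 2 / (C₁₂ (s - a)) + √(2 C₁₃ / C₁₂)` is a strict supersolution,
`Y' + C₁₂ Y² > C₁₃`, so `y` can never cross it from below. As `Y → +∞` when `s → a⁺` while `y`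
stays bounded near `a`, `y` starts below `Y`, hence `y ≤ Y` on `(a, ∞)`; then let `a → t₀⁺`. -/

open Set Filter Topology

noncomputable def riccatiBarrier (c b a s : ℝ) : ℝ := 2 / (c * (s - a)) + b

section RiccatiBarrier

variable {c b a s : ℝ}

theorem hasDerivAt_riccatiBarrier (hc : c ≠ 0) (hs : s ≠ a) :
    HasDerivAt (riccatiBarrier c b a) (-2 / (c * (s - a) ^ 2)) s := by
  have hlin : HasDerivAt (fun s => c * (s - a)) c s := by
    simpa using ((hasDerivAt_id s).sub_const a).const_mul c
  have hfun : riccatiBarrier c b a = fun s => 2 * (fun s => c * (s - a))⁻¹ s + b := by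
    funext s; simp [riccatiBarrier, div_eq_mul_inv]
  rw [hfun]
  refine ((hlin.inv (mul_ne_zero hc (sub_ne_zero.2 hs))).const_mul 2).add_const b |>.congr_deriv ?_
  have := sub_ne_zero.2 hs
  field_simp

theorem lt_riccatiBarrier_deriv_add_sq {d : ℝ} (hc : 0 < c) (hb : 0 ≤ b) (hd : d ≤ c * b ^ 2)
    (hs : a < s) : d < -2 / (c * (s - a) ^ 2) + c * riccatiBarrier c b a s ^ 2 := by
  have hu : 0 < s - a := sub_pos.2 hs
  have hexpand : -2 / (c * (s - a) ^ 2) + c * riccatiBarrier c b a s ^ 2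
      = 2 / (c * (s - a) ^ 2) + 4 * b / (s - a) + c * b ^ 2 := by
    unfold riccatiBarrier
    field_simp
    ring
  rw [hexpand]
  have : 0 < 2 / (c * (s - a) ^ 2) := by positivity
  have : 0 ≤ 4 * b / (s - a) := by positivity
  linarith

theorem tendsto_riccatiBarrier_nhdsGT (hc : 0 < c) :
    Tendsto (riccatiBarrier c b a) (𝓝[>] a) atTop := by
  have hden : Tendsto (fun s => c * (s - a) / 2) (𝓝[>] a) (𝓝[>] 0) := by
    refine tendsto_nhdsWithin_iff.2 ⟨?_, ?_⟩
    · have : Tendsto (fun s => c * (s - a) / 2) (𝓝 a) (𝓝 (c * (a - a) / 2)) :=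
        (by fun_prop : Continuous fun s => c * (s - a) / 2).tendsto a
      simpa using this.mono_left nhdsWithin_le_nhds
    · filter_upwards [self_mem_nhdsWithin] with s (hs : a < s)
      have := sub_pos.2 hs
      exact (by positivity : 0 < c * (s - a) / 2)
  refine tendsto_atTop_add_const_right _ b ?_
  convert hden.inv_tendsto_nhdsGT_zero using 1
  ext s; simp [div_eq_mul_inv, mul_comm]

theorem le_riccatiBarrier_of_le {y : ℝ → ℝ} {d s₀ t : ℝ} (hc : 0 < c) (hb : 0 ≤ b)
    (hd : d ≤ c * b ^ 2) (has₀ : a < s₀) (hs₀t : s₀ ≤ t)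
    (hy : ∀ s ∈ Icc s₀ t, DifferentiableAt ℝ y s)
    (hineq : ∀ s ∈ Icc s₀ t, deriv y s + c * y s ^ 2 ≤ d)
    (hs₀ : y s₀ ≤ riccatiBarrier c b a s₀) :
    y t ≤ riccatiBarrier c b a t := by
  have hbarrier : ∀ s ∈ Icc s₀ t,
      HasDerivAt (riccatiBarrier c b a) (-2 / (c * (s - a) ^ 2)) s := fun s hs =>
    hasDerivAt_riccatiBarrier hc.ne' (has₀.trans_le hs.1).ne'
  refine image_le_of_deriv_right_lt_deriv_boundary'
    (fun s hs => (hy s hs).continuousAt.continuousWithinAt)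
    (fun s hs => (hy s (Ico_subset_Icc_self hs)).hasDerivAt.hasDerivWithinAt) hs₀
    (fun s hs => (hbarrier s hs).continuousAt.continuousWithinAt)
    (fun s hs => (hbarrier s (Ico_subset_Icc_self hs)).hasDerivWithinAt)
    (fun s hs hys => ?_) ⟨hs₀t, le_rfl⟩
  have hs' := Ico_subset_Icc_self hs
  have hineq_s := hineq s hs'
  rw [hys] at hineq_s
  linarith [lt_riccatiBarrier_deriv_add_sq hc hb hd (has₀.trans_le hs'.1)]

theorem le_riccatiBarrier {y : ℝ → ℝ} {d t : ℝ} (hc : 0 < c) (hb : 0 ≤ b)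
    (hd : d ≤ c * b ^ 2) (hat : a < t)
    (hy : ∀ s ∈ Icc a t, DifferentiableAt ℝ y s)
    (hineq : ∀ s ∈ Ioc a t, deriv y s + c * y s ^ 2 ≤ d) :
    y t ≤ riccatiBarrier c b a t := by
  have hya : ∀ᶠ s in 𝓝[>] a, y s < y a + 1 :=
    (hy a ⟨le_rfl, hat.le⟩).continuousAt.continuousWithinAt.eventually_lt_const
      (lt_add_one _)
  obtain ⟨s₀, ⟨hys₀, hbs₀⟩, hs₀⟩ := (hya.and
    ((tendsto_riccatiBarrier_nhdsGT hc).eventually_gt_atTop (y a + 1))).and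
    (Ioo_mem_nhdsGT hat) |>.exists
  exact le_riccatiBarrier_of_le hc hb hd hs₀.1 hs₀.2.le
    (fun s hs => hy s ⟨hs₀.1.le.trans hs.1, hs.2⟩)
    (fun s hs => hineq s ⟨hs₀.1.trans_le hs.1, hs.2⟩) (by linarith)

end RiccatiBarrier

theorem riccati_comparison_general
    (C₁₂ C₁₃ t₀ : ℝ) (h12 : 0 < C₁₂)
    (y : ℝ → ℝ)
    (hydiff : ∀ t, t₀ < t → DifferentiableAt ℝ y t)
    (hyineq : ∀ t, t₀ < t → deriv y t + C₁₂ * (y t) ^ 2 ≤ C₁₃) :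
    ∀ t, t₀ < t → y t ≤ 2 / (C₁₂ * (t - t₀)) + Real.sqrt (2 * C₁₃ / C₁₂) := by
  intro t ht
  set b := Real.sqrt (2 * C₁₃ / C₁₂)
  have hd : C₁₃ ≤ C₁₂ * b ^ 2 := by
    rw [Real.sq_sqrt', mul_max_of_nonneg _ _ h12.le, mul_div_cancel₀ _ h12.ne']
    rcases le_total 0 C₁₃ with h | h
    · exact le_max_of_le_left (by linarith)
    · exact le_max_of_le_right (by simpa using h)
  have hbarrier_cont : ContinuousAt (fun a => riccatiBarrier C₁₂ b a t) t₀ := by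
    have : C₁₂ * (t - t₀) ≠ 0 := (mul_pos h12 (sub_pos.2 ht)).ne'
    unfold riccatiBarrier
    fun_prop (disch := assumption)
  refine ge_of_tendsto (hbarrier_cont.continuousWithinAt (s := Ioi t₀)) ?_
  filter_upwards [Ioo_mem_nhdsGT ht] with a ha
  exact le_riccatiBarrier h12 (Real.sqrt_nonneg _) hd ha.2
    (fun s hs => hydiff s (ha.1.trans_le hs.1)) (fun s hs => hyineq s (ha.1.trans hs.1))

theorem riccati_comparison
    (C₁₂ C₁₃ t₀ : ℝ) (h12 : 0 < C₁₂) (h13 : 0 < C₁₃)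
    (y : ℝ → ℝ)
    (hy0 : ∀ t, t₀ < t → 0 ≤ y t)
    (hydiff : ∀ t, t₀ < t → DifferentiableAt ℝ y t)
    (hyineq : ∀ t, t₀ < t → deriv y t + C₁₂ * (y t) ^ 2 ≤ C₁₃) :
    ∀ t, t₀ < t → y t ≤ 2 / (C₁₂ * (t - t₀)) + Real.sqrt (2 * C₁₃ / C₁₂) :=
  riccati_comparison_general C₁₂ C₁₃ t₀ h12 y hydiff hyineq
end

section
/- Let Ω be a measure space of finite measure, n ∈ L²(Ω) positive with ∫_Ω n = ∫_Ω n̄ where n̄ > 0 is constant. Then 0 ≤ ∫_Ω n (ln n - ln n̄) ≤ (1/n̄) · ‖n‖_{L²} · ‖n - n̄‖_{L²}. -/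
/-!
Both bounds compare the integrand `n (ln n - ln n̄)` pointwise with a polynomial in `n`, using
`ln y ≤ y - 1`. With `y = n̄ / n` this gives `n - n̄ ≤ n (ln n - ln n̄)`, whose integral vanishes by
the mass condition. With `y = n / n̄` it gives `n (ln n - ln n̄) ≤ n (n - n̄) / n̄`, and the integral
of `n (n - n̄)` is bounded by Cauchy–Schwarz.
-/

open MeasureTheory Real Set

namespace Real

theorem sub_le_mul_log_sub_log {x c : ℝ} (hx : 0 < x) (hc : 0 < c) :
    x - c ≤ x * (log x - log c) := by
  have h := log_le_sub_one_of_pos (div_pos hc hx)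
  rw [log_div hc.ne' hx.ne'] at h
  have h' := mul_le_mul_of_nonneg_left h hx.le
  rw [mul_sub x (c / x), mul_div_cancel₀ c hx.ne', mul_one] at h'
  linarith

theorem mul_log_sub_log_le_mul_sub_div {x c : ℝ} (hx : 0 < x) (hc : 0 < c) :
    x * (log x - log c) ≤ x * (x - c) / c := by
  have h := log_le_sub_one_of_pos (div_pos hx hc)
  rw [log_div hx.ne' hc.ne', div_sub_one hc.ne'] at h
  rw [mul_div_assoc]
  exact mul_le_mul_of_nonneg_left h hx.le

end Real

namespace MeasureTheory

variable {α : Type*} [MeasurableSpace α] {μ : Measure α} {f g : α → ℝ}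

theorem memLp_two_of_ae_nonneg_of_integrable_sq (h0 : ∀ᵐ x ∂μ, 0 ≤ f x)
    (h : Integrable (fun x => f x ^ 2) μ) : MemLp f 2 μ := by
  have hmeas : AEStronglyMeasurable f μ :=
    (continuous_sqrt.comp_aestronglyMeasurable h.1).congr
      (h0.mono fun x hx => sqrt_sq hx)
  exact (memLp_two_iff_integrable_sq hmeas).2 h

theorem integral_mul_le_sqrt_integral_sq_mul_sqrt_integral_sq (hf : MemLp f 2 μ)
    (hg : MemLp g 2 μ) :
    ∫ x, f x * g x ∂μ ≤ √(∫ x, f x ^ 2 ∂μ) * √(∫ x, g x ^ 2 ∂μ) := by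
  have hpq : (2 : ℝ).HolderConjugate 2 := .two_two
  calc ∫ x, f x * g x ∂μ ≤ ‖∫ x, f x * g x ∂μ‖ := le_norm_self _
    _ ≤ ∫ x, ‖f x‖ * ‖g x‖ ∂μ := by
        simpa only [norm_mul] using norm_integral_le_integral_norm (fun x => f x * g x)
    _ ≤ (∫ x, ‖f x‖ ^ (2 : ℝ) ∂μ) ^ (1 / 2 : ℝ) * (∫ x, ‖g x‖ ^ (2 : ℝ) ∂μ) ^ (1 / 2 : ℝ) :=
        integral_mul_norm_le_Lp_mul_Lq hpq (by simpa using hf) (by simpa using hg)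
    _ = √(∫ x, f x ^ 2 ∂μ) * √(∫ x, g x ^ 2 ∂μ) := by
        simp only [rpow_two, norm_eq_abs, sq_abs, ← sqrt_eq_rpow]

theorem Integrable.mul_log_sub_log (hf : Integrable f μ)
    (hflog : Integrable (fun x => f x * log (f x)) μ) (c : ℝ) :
    Integrable (fun x => f x * (log (f x) - log c)) μ :=
  (hflog.sub (hf.mul_const (log c))).congr (.of_forall fun _ => (mul_sub _ _ _).symm)

variable [IsFiniteMeasure μ] {c : ℝ}

theorem integral_mul_log_sub_log_nonneg (hpos : ∀ᵐ x ∂μ, 0 < f x) (hf : Integrable f μ)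
    (hflog : Integrable (fun x => f x * log (f x)) μ) (hc : 0 < c)
    (hmass : ∫ x, f x ∂μ = c * μ.real univ) :
    0 ≤ ∫ x, f x * (log (f x) - log c) ∂μ :=
  calc 0 = ∫ x, (f x - c) ∂μ := by
        rw [integral_sub hf (integrable_const c), hmass, integral_const, smul_eq_mul, mul_comm,
          sub_self]
    _ ≤ ∫ x, f x * (log (f x) - log c) ∂μ :=
        integral_mono_ae (hf.sub (integrable_const c)) (hf.mul_log_sub_log hflog c)
          (hpos.mono fun x hx => sub_le_mul_log_sub_log hx hc)

theorem integral_mul_log_sub_log_le (hpos : ∀ᵐ x ∂μ, 0 < f x) (hf : MemLp f 2 μ)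
    (hflog : Integrable (fun x => f x * log (f x)) μ) (hc : 0 < c) :
    ∫ x, f x * (log (f x) - log c) ∂μ
      ≤ (1 / c) * √(∫ x, f x ^ 2 ∂μ) * √(∫ x, (f x - c) ^ 2 ∂μ) := by
  have hfc : MemLp (fun x => f x - c) 2 μ := hf.sub (memLp_const c)
  calc ∫ x, f x * (log (f x) - log c) ∂μ ≤ ∫ x, f x * (f x - c) / c ∂μ :=
        integral_mono_ae ((hf.integrable one_le_two).mul_log_sub_log hflog c)
          ((hf.integrable_mul hfc).div_const c)
          (hpos.mono fun x hx => mul_log_sub_log_le_mul_sub_div hx hc)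
    _ = (1 / c) * ∫ x, f x * (f x - c) ∂μ := by rw [integral_div, one_div_mul_eq_div]
    _ ≤ (1 / c) * (√(∫ x, f x ^ 2 ∂μ) * √(∫ x, (f x - c) ^ 2 ∂μ)) := by
        gcongr
        exact integral_mul_le_sqrt_integral_sq_mul_sqrt_integral_sq hf hfc
    _ = _ := (mul_assoc _ _ _).symm

end MeasureTheory

theorem quantitative_entropy_estimate
    (d : ℕ) (Ω : Set (EuclideanSpace ℝ (Fin d))) (hΩ : MeasurableSet Ω)
    (hfin : volume Ω ≠ ⊤)
    (n : EuclideanSpace ℝ (Fin d) → ℝ) (hn : ∀ x ∈ Ω, 0 < n x)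
    (hn2 : IntegrableOn (fun x => (n x) ^ 2) Ω)
    (hnlog : IntegrableOn (fun x => n x * Real.log (n x)) Ω)
    (nbar : ℝ) (hnbar : 0 < nbar)
    (hmass : ∫ x in Ω, n x = nbar * (volume Ω).toReal) :
    0 ≤ ∫ x in Ω, n x * (Real.log (n x) - Real.log nbar) ∧
    (∫ x in Ω, n x * (Real.log (n x) - Real.log nbar))
      ≤ (1 / nbar) * Real.sqrt (∫ x in Ω, (n x) ^ 2)
          * Real.sqrt (∫ x in Ω, (n x - nbar) ^ 2) := by
  have : IsFiniteMeasure (volume.restrict Ω) := isFiniteMeasure_restrict.2 hfin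
  have hpos : ∀ᵐ x ∂volume.restrict Ω, 0 < n x := ae_restrict_of_forall_mem hΩ hn
  have hL2 : MemLp n 2 (volume.restrict Ω) :=
    memLp_two_of_ae_nonneg_of_integrable_sq (hpos.mono fun _ hx => hx.le) hn2
  have hmass' : ∫ x in Ω, n x = nbar * (volume.restrict Ω).real univ := by
    rwa [measureReal_restrict_apply_univ]
  exact ⟨integral_mul_log_sub_log_nonneg hpos (hL2.integrable one_le_two) hnlog hnbar hmass',
    integral_mul_log_sub_log_le hpos hL2 hnlog hnbar⟩
end
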